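/- With g ∈ Sp(V), Z as in the construction of the metaplectic kernel u_g = e^Z, and x, y ∈ V, one has ⟨(x₊ + y₋) | Z(x₊ + y₋)⟩ = 2⟨C_g⁻¹x | y⟩ + ⟨x | Z_{g⁻¹}x⟩ + ⟨Z_g y | y⟩, and consequently u_g((eˣ)₊(eʸ)₋) = exp( ½{ 2⟨C_g⁻¹x|y⟩ + ⟨x|Z_{g⁻¹}x⟩ + ⟨Z_g y|y⟩ } ). -/

import Mathlib

open scoped ComplexConjugate

noncomputable section

section Defs

variable {V W A : Type} [AddCommGroup V] [Module ℂ V] [CommRing A] [Algebra ℂ A]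

/-- `A` (with embedding `ι`) is the symmetric algebra of `V`: universal property. -/
def IsSymmAlg (ι : V →ₗ[ℂ] A) : Prop :=
  ∀ (B : Type) [CommRing B] [Algebra ℂ B] (f : V →ₗ[ℂ] B),
    ∃! F : A →ₐ[ℂ] B, ∀ v, F (ι v) = f v

/-- The span of `n`-fold products of generators: the degree-`n` part. -/
def GradeOf (gen : W → A) (n : ℕ) : Submodule ℂ A :=
  Submodule.span ℂ {a | ∃ f : Fin n → W, a = ∏ i, gen (f i)}

/-- The algebra is spanned by products of generators. -/
def SpanProdsOf (gen : W → A) : Prop :=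
  ∀ x : A, x ∈ Submodule.span ℂ {a | ∃ (n : ℕ) (f : Fin n → W), a = ∏ i, gen (f i)}

/-- A quadratic: an antilinear functional concentrated in degree 2. -/
def IsQuadOf (gen : W → A) (ζ : A →ₗ⋆[ℂ] ℂ) : Prop :=
  ∀ n : ℕ, n ≠ 2 → ∀ φ ∈ GradeOf gen n, ζ φ = 0

/-- The commutative product on the full antidual induced by the coproduct,
characterized on products of generators. -/
def IsConvProdOf (gen : W → A)
    (mul : (A →ₗ⋆[ℂ] ℂ) → (A →ₗ⋆[ℂ] ℂ) → (A →ₗ⋆[ℂ] ℂ)) : Prop :=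
  ∀ (Φ Ψ : A →ₗ⋆[ℂ] ℂ) (n : ℕ) (v : Fin n → W),
    mul Φ Ψ (∏ i, gen (v i)) =
      ∑ S : Finset (Fin n), Φ (∏ i ∈ S, gen (v i)) * Ψ (∏ i ∈ Sᶜ, gen (v i))

/-- The counit (unit of the antidual algebra): kills products of at least one generator. -/
def IsCounitOf (gen : W → A) (ε : A →ₗ⋆[ℂ] ℂ) : Prop :=
  ∀ (n : ℕ) (v : Fin n → W), ε (∏ i, gen (v i)) = if n = 0 then 1 else 0

/-- Powers of a functional with respect to the convolution product. -/
def powD (mul : (A →ₗ⋆[ℂ] ℂ) → (A →ₗ⋆[ℂ] ℂ) → (A →ₗ⋆[ℂ] ℂ))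
    (ε ζ : A →ₗ⋆[ℂ] ℂ) : ℕ → (A →ₗ⋆[ℂ] ℂ)
  | 0 => ε
  | n + 1 => mul ζ (powD mul ε ζ n)

/-- `E` is the Gaussian `exp ζ = Σ ζⁿ/n!` (a finite sum in each degree). -/
def IsGaussianOf (gen : W → A)
    (mul : (A →ₗ⋆[ℂ] ℂ) → (A →ₗ⋆[ℂ] ℂ) → (A →ₗ⋆[ℂ] ℂ))
    (ε ζ E : A →ₗ⋆[ℂ] ℂ) : Prop :=
  ∀ k : ℕ, ∀ ψ ∈ GradeOf gen k,
    E ψ = ∑ n ∈ Finset.range (k + 1), ((n.factorial : ℂ))⁻¹ * powD mul ε ζ n ψ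

end Defs

section Defs2

variable {V A : Type} [NormedAddCommGroup V] [InnerProductSpace ℂ V]
  [CommRing A] [Algebra ℂ A]

/-- The family of annihilation operators: derivations killing `1` with
`a v (ι w) = ⟨v|w⟩ 1`. -/
def IsAnn (ι : V →ₗ[ℂ] A) (a : V → A →ₗ[ℂ] A) : Prop :=
  ∀ v : V, (∀ x y : A, a v (x * y) = a v x * y + x * a v y) ∧
    a v 1 = 0 ∧ ∀ w : V, a v (ι w) = (inner ℂ v w : ℂ) • (1 : A)

/-- The canonical inner product on the symmetric algebra: graded pieces are
orthogonal and the permanent formula holds. (Antilinear in the first slot.) -/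
def IsCanonInner (ι : V →ₗ[ℂ] A) (Bf : A →ₗ⋆[ℂ] A →ₗ[ℂ] ℂ) : Prop :=
  (∀ (k n : ℕ), k ≠ n → ∀ (x : Fin k → V) (y : Fin n → V),
      Bf (∏ i, ι (x i)) (∏ i, ι (y i)) = 0) ∧
  ∀ (n : ℕ) (x y : Fin n → V),
      Bf (∏ i, ι (x i)) (∏ i, ι (y i)) =
        ∑ p : Equiv.Perm (Fin n), ∏ i, (inner ℂ (x i) (y (p i)) : ℂ)

/-- Iterated annihilation `a(vₙ)⋯a(v₁)φ` (applying `a(v₁)` first). -/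
def iterAnn (a : V → A →ₗ[ℂ] A) : (n : ℕ) → (Fin n → V) → A → A
  | 0, _, φ => φ
  | n + 1, v, φ => a (v (Fin.last n)) (iterAnn a n (fun i => v i.castSucc) φ)

/-- A symmetric bi-antilinear map `V × V → ℂ`. -/
def IsSymAnti (Z : V → V → ℂ) : Prop :=
  (∀ x y, Z x y = Z y x) ∧
  (∀ x y y', Z x (y + y') = Z x y + Z x y') ∧
  (∀ (c : ℂ) (x y : V), Z x (c • y) = conj c * Z x y)

end Defs2

section DefsC

variable {A AC : Type} [CommRing A] [Algebra ℂ A] [CommRing AC] [Algebra ℂ AC]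

/-- An antilinear (conjugate-linear) algebra morphism, such as `φ ↦ φ₋`. -/
def IsAntiAlgHom (m : A → AC) : Prop :=
  (∀ x y : A, m (x + y) = m x + m y) ∧ (∀ (c : ℂ) (x : A), m (c • x) = conj c • m x) ∧
  (∀ x y : A, m (x * y) = m x * m y) ∧ m 1 = 1

end DefsC

/-!
Write `ω = Im ⟨·|·⟩`, so that `⟨u|v⟩ = ω(u, iv) + i ω(u, v)`. Since `g` preserves `ω`, this
gives `C_g* = C_{g⁻¹}`, which turns the mixed term `ζ(x₊y₋) = ⟨x|C_{g⁻¹}⁻¹y⟩` into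
`⟨C_g⁻¹x|y⟩`; the quadratic identity is then the expansion of a square.

For the series, `w = x₊ + y₋` is a sum of generators, so the convolution product acts on its
powers by the binomial formula. As `ζ` lives in degree 2, `ζⁿ(wᵏ)` vanishes unless `k = 2n`,
where it equals `(2n)!/2ⁿ · ζ(w²)ⁿ`. Hence `e^ζ(w²ⁿ) = (2n)!/(2ⁿ n!) · ζ(w²)ⁿ`, and
`Σₖ e^ζ(wᵏ)/k!` is the exponential series of `ζ(w²)/2`.
-/

section Symplectic

open Complex

variable {V : Type} [NormedAddCommGroup V] [InnerProductSpace ℂ V]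

lemma inner_eq_im_inner_I_smul_add_im_inner_mul_I (u v : V) :
    inner ℂ u v = ((inner ℂ u (I • v)).im : ℂ) + (inner ℂ u v).im * I := by
  rw [inner_smul_right, mul_im, I_re, I_im, zero_mul, one_mul, zero_add]
  exact (re_add_im _).symm

lemma im_inner_I_smul_right (u v : V) : (inner ℂ u (I • v)).im = -(inner ℂ (I • u) v).im := by
  simp

lemma inner_complexLinearPart_left (g : V ≃L[ℝ] V)
    (hg : ∀ x y : V, (inner ℂ (g x) (g y)).im = (inner ℂ x y).im) (a b : V) :
    inner ℂ ((2 : ℝ)⁻¹ • (g a - I • g (I • a))) b =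
      inner ℂ a ((2 : ℝ)⁻¹ • (g.symm b - I • g.symm (I • b))) := by
  have hg_symm (u w : V) : (inner ℂ u (g.symm w)).im = (inner ℂ (g u) w).im := by
    simpa using (hg u (g.symm w)).symm
  have hdecomp_symm (w : V) : inner ℂ a (g.symm w) =
      (-(inner ℂ (g (I • a)) w).im : ℂ) + (inner ℂ (g a) w).im * I := by
    rw [inner_eq_im_inner_I_smul_add_im_inner_mul_I, im_inner_I_smul_right, hg_symm, hg_symm,
      ofReal_neg]
  have h1 := inner_eq_im_inner_I_smul_add_im_inner_mul_I (g a) b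
  have h2 := inner_eq_im_inner_I_smul_add_im_inner_mul_I (g (I • a)) b
  have h3 := hdecomp_symm b
  have h4 := hdecomp_symm (I • b)
  set A1 := (inner ℂ (g a) b).im
  set A2 := (inner ℂ (g a) (I • b)).im
  set A3 := (inner ℂ (g (I • a)) b).im
  set A4 := (inner ℂ (g (I • a)) (I • b)).im
  simp only [RCLike.real_smul_eq_coe_smul (K := ℂ), inner_smul_left, inner_smul_right,
    inner_sub_left, inner_sub_right, h1, h2, h3, h4, conj_I, RCLike.conj_ofReal]
  ring_nf
  rw [I_sq]
  ring

end Symplectic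

lemma Fintype.sum_prod_comp_eq_sum_pow {σ J R : Type} [Fintype σ] [DecidableEq σ] [Fintype J]
    [CommSemiring R] (g : J → R) :
    ∑ u : σ → J, ∏ i, g (u i) = (∑ j, g j) ^ Fintype.card σ := by
  rw [← Finset.card_univ, ← Finset.prod_const]
  exact (Fintype.prod_sum fun _ j => g j).symm

section GaussianSeries

open Finset

variable {W J AC : Type} [Fintype J] [CommRing AC] [Algebra ℂ AC] {gen : W → AC} (f : J → W)

lemma sum_gen_pow_mem_gradeOf (k : ℕ) : (∑ j, gen (f j)) ^ k ∈ GradeOf gen k := by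
  rw [Fintype.sum_pow]
  exact Submodule.sum_mem _ fun t _ => Submodule.subset_span ⟨fun i => f (t i), rfl⟩

lemma IsCounitOf.apply_sum_gen_pow {ε : AC →ₗ⋆[ℂ] ℂ} (hε : IsCounitOf gen ε) (k : ℕ) :
    ε ((∑ j, gen (f j)) ^ k) = if k = 0 then 1 else 0 := by
  rw [Fintype.sum_pow, map_sum]
  simp only [hε k, sum_const, card_univ]
  cases k <;> simp

lemma sum_apply_prod_gen_mul_apply_prod_gen (Φ Ψ : AC →ₗ⋆[ℂ] ℂ) {k : ℕ}
    (S : Finset (Fin k)) :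
    ∑ t : Fin k → J, Φ (∏ i ∈ S, gen (f (t i))) * Ψ (∏ i ∈ Sᶜ, gen (f (t i))) =
      Φ ((∑ j, gen (f j)) ^ #S) * Ψ ((∑ j, gen (f j)) ^ (k - #S)) := by
  classical
  let e := Equiv.piEquivPiSubtypeProd (· ∈ S) (fun _ => J)
  calc ∑ t : Fin k → J, Φ (∏ i ∈ S, gen (f (t i))) * Ψ (∏ i ∈ Sᶜ, gen (f (t i)))
      = ∑ t : Fin k → J, Φ (∏ i, gen (f ((e t).1 i))) * Ψ (∏ i, gen (f ((e t).2 i))) := by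
        refine sum_congr rfl fun t _ => ?_
        rw [prod_subtype S (fun _ => Iff.rfl), prod_subtype Sᶜ (fun _ => mem_compl)]
        rfl
    _ = ∑ u : S → J, ∑ v : {i // i ∉ S} → J,
          Φ (∏ i, gen (f (u i))) * Ψ (∏ i, gen (f (v i))) := by
        rw [e.sum_comp (fun uv => Φ (∏ i, gen (f (uv.1 i))) * Ψ (∏ i, gen (f (uv.2 i)))),
          Fintype.sum_prod_type]
    _ = _ := by
        rw [← sum_mul_sum, ← map_sum, ← map_sum,
          Fintype.sum_prod_comp_eq_sum_pow (fun j => gen (f j)),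
          Fintype.sum_prod_comp_eq_sum_pow (fun j => gen (f j)),
          Fintype.card_subtype_compl, Fintype.card_coe, Fintype.card_fin]

lemma IsConvProdOf.apply_sum_gen_pow
    {mul : (AC →ₗ⋆[ℂ] ℂ) → (AC →ₗ⋆[ℂ] ℂ) → (AC →ₗ⋆[ℂ] ℂ)} (hmul : IsConvProdOf gen mul)
    (Φ Ψ : AC →ₗ⋆[ℂ] ℂ) (k : ℕ) :
    mul Φ Ψ ((∑ j, gen (f j)) ^ k) =
      ∑ i ∈ range (k + 1),
        k.choose i • (Φ ((∑ j, gen (f j)) ^ i) * Ψ ((∑ j, gen (f j)) ^ (k - i))) := by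
  calc mul Φ Ψ ((∑ j, gen (f j)) ^ k)
      = ∑ t : Fin k → J, ∑ S : Finset (Fin k),
          Φ (∏ i ∈ S, gen (f (t i))) * Ψ (∏ i ∈ Sᶜ, gen (f (t i))) := by
        rw [Fintype.sum_pow, map_sum]
        exact sum_congr rfl fun t _ => hmul Φ Ψ k _
    _ = ∑ S ∈ (univ : Finset (Fin k)).powerset,
          Φ ((∑ j, gen (f j)) ^ #S) * Ψ ((∑ j, gen (f j)) ^ (k - #S)) := by
        rw [sum_comm, powerset_univ]
        exact sum_congr rfl fun S _ => sum_apply_prod_gen_mul_apply_prod_gen f Φ Ψ S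
    _ = _ := by
        rw [sum_powerset_apply_card
            (fun i => Φ ((∑ j, gen (f j)) ^ i) * Ψ ((∑ j, gen (f j)) ^ (k - i))),
          card_univ, Fintype.card_fin]

variable {mul : (AC →ₗ⋆[ℂ] ℂ) → (AC →ₗ⋆[ℂ] ℂ) → (AC →ₗ⋆[ℂ] ℂ)} {ε ζ : AC →ₗ⋆[ℂ] ℂ}

lemma powD_apply_sum_gen_pow (hmul : IsConvProdOf gen mul) (hε : IsCounitOf gen ε)
    (hζ : IsQuadOf gen ζ) (n k : ℕ) :
    powD mul ε ζ n ((∑ j, gen (f j)) ^ k) =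
      if k = 2 * n then ((2 * n).factorial : ℂ) / 2 ^ n * ζ ((∑ j, gen (f j)) ^ 2) ^ n
      else 0 := by
  induction n generalizing k with
  | zero => simp [powD, hε.apply_sum_gen_pow]
  | succ n ih =>
    have hζ_ne_two : ∀ i ≠ 2, ζ ((∑ j, gen (f j)) ^ i) = 0 :=
      fun i hi => hζ i hi _ (sum_gen_pow_mem_gradeOf f i)
    have hsucc : powD mul ε ζ (n + 1) ((∑ j, gen (f j)) ^ k) =
        k.choose 2 • (ζ ((∑ j, gen (f j)) ^ 2) * powD mul ε ζ n ((∑ j, gen (f j)) ^ (k - 2))) := by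
      rw [powD, hmul.apply_sum_gen_pow]
      refine sum_eq_single 2 (fun i _ hi => ?_) (fun h2 => ?_)
      · rw [hζ_ne_two i hi, zero_mul, smul_zero]
      · rw [Nat.choose_eq_zero_of_lt (by simpa using h2), zero_smul]
    rw [hsucc, ih]
    by_cases hk : k = 2 * n + 2
    · subst hk
      have hfac : ((2 * n + 2).choose 2 : ℂ) * 2 * (2 * n).factorial =
          (2 * (n + 1)).factorial := by
        exact_mod_cast Nat.choose_mul_factorial_mul_factorial (n := 2 * n + 2) (k := 2) (by omega)
      rw [if_pos (by omega), if_pos (by ring), nsmul_eq_mul, ← hfac]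
      field_simp
      ring
    · rcases Nat.lt_or_ge k 2 with hk2 | hk2
      · simp [Nat.choose_eq_zero_of_lt hk2, show k ≠ 2 * (n + 1) by omega]
      · simp [show k - 2 ≠ 2 * n by omega, show k ≠ 2 * (n + 1) by omega]

variable {E : AC →ₗ⋆[ℂ] ℂ}

lemma IsGaussianOf.apply_sum_gen_pow_two_mul (hE : IsGaussianOf gen mul ε ζ E)
    (hmul : IsConvProdOf gen mul) (hε : IsCounitOf gen ε) (hζ : IsQuadOf gen ζ) (n : ℕ) :
    E ((∑ j, gen (f j)) ^ (2 * n)) =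
      (n.factorial : ℂ)⁻¹ * ((2 * n).factorial / 2 ^ n * ζ ((∑ j, gen (f j)) ^ 2) ^ n) := by
  rw [hE _ _ (sum_gen_pow_mem_gradeOf f _), sum_eq_single n (fun i _ hi => ?_)
    (fun hn => absurd (mem_range.mpr (by omega)) hn), powD_apply_sum_gen_pow f hmul hε hζ,
    if_pos rfl]
  rw [powD_apply_sum_gen_pow f hmul hε hζ, if_neg (by omega), mul_zero]

lemma IsGaussianOf.apply_sum_gen_pow_of_odd (hE : IsGaussianOf gen mul ε ζ E)
    (hmul : IsConvProdOf gen mul) (hε : IsCounitOf gen ε) (hζ : IsQuadOf gen ζ) {k : ℕ}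
    (hk : Odd k) : E ((∑ j, gen (f j)) ^ k) = 0 := by
  rw [hE _ _ (sum_gen_pow_mem_gradeOf f _)]
  refine sum_eq_zero fun n _ => ?_
  rw [powD_apply_sum_gen_pow f hmul hε hζ,
    if_neg fun h => Nat.not_even_iff_odd.mpr hk ⟨n, by omega⟩, mul_zero]

lemma IsGaussianOf.hasSum_sum_gen_pow (hE : IsGaussianOf gen mul ε ζ E)
    (hmul : IsConvProdOf gen mul) (hε : IsCounitOf gen ε) (hζ : IsQuadOf gen ζ) :
    HasSum (fun k : ℕ => (k.factorial : ℂ)⁻¹ * E ((∑ j, gen (f j)) ^ k))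
      (Complex.exp (2⁻¹ * ζ ((∑ j, gen (f j)) ^ 2))) := by
  have hexp := NormedSpace.expSeries_div_hasSum_exp (2⁻¹ * ζ ((∑ j, gen (f j)) ^ 2))
  rw [← Complex.exp_eq_exp_ℂ] at hexp
  refine ((mul_right_injective₀ (two_ne_zero (α := ℕ))).hasSum_iff fun k hk => ?_).mp ?_
  · rw [hE.apply_sum_gen_pow_of_odd f hmul hε hζ (Nat.not_even_iff_odd.mp fun ⟨n, hn⟩ =>
      hk ⟨n, by dsimp only; omega⟩), mul_zero]
  · have hterm (n : ℕ) : ((2 * n).factorial : ℂ)⁻¹ * E ((∑ j, gen (f j)) ^ (2 * n)) =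
        (2⁻¹ * ζ ((∑ j, gen (f j)) ^ 2)) ^ n / n.factorial := by
      have h2n : ((2 * n).factorial : ℂ) ≠ 0 := Nat.cast_ne_zero.mpr (Nat.factorial_ne_zero _)
      rw [hE.apply_sum_gen_pow_two_mul f hmul hε hζ, mul_pow, inv_pow]
      field_simp
    simpa only [Function.comp_def, hterm] using hexp

end GaussianSeries

theorem metaplectic_kernel_formula_general {V A AC : Type}
    [NormedAddCommGroup V] [InnerProductSpace ℂ V]
    [CommRing A] [Algebra ℂ A] [CommRing AC] [Algebra ℂ AC]
    (ι : V →ₗ[ℂ] A)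
    (p : A →ₐ[ℂ] AC) (m : A → AC)
    (gen : V ⊕ V → AC)
    (hgen : ∀ w : V ⊕ V, gen w = Sum.elim (fun v => p (ι v)) (fun v => m (ι v)) w)
    (mulC : (AC →ₗ⋆[ℂ] ℂ) → (AC →ₗ⋆[ℂ] ℂ) → (AC →ₗ⋆[ℂ] ℂ))
    (hmulC : IsConvProdOf gen mulC)
    (εC : AC →ₗ⋆[ℂ] ℂ) (hεC : IsCounitOf gen εC)
    (g : V ≃L[ℝ] V)
    (hg : ∀ x y : V, (inner ℂ (g x) (g y) : ℂ).im = (inner ℂ x y : ℂ).im)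
    (Cg Cg' Zg Zg' Cginv Cg'inv : V → V)
    (hCg : ∀ x : V, Cg x = (2 : ℝ)⁻¹ • (g x - Complex.I • g (Complex.I • x)))
    (hCg' : ∀ x : V, Cg' x = (2 : ℝ)⁻¹ • (g.symm x - Complex.I • g.symm (Complex.I • x)))
    (hCginv : ∀ x : V, Cg (Cginv x) = x ∧ Cginv (Cg x) = x)
    (hCg'inv : ∀ x : V, Cg' (Cg'inv x) = x ∧ Cg'inv (Cg' x) = x)
    (ζZ : AC →ₗ⋆[ℂ] ℂ) (hζq : IsQuadOf gen ζZ)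
    (hζpp : ∀ x y : V, ζZ (p (ι x) * p (ι y)) = (inner ℂ x (Zg' y) : ℂ))
    (hζpm : ∀ x y : V, ζZ (p (ι x) * m (ι y)) = (inner ℂ x (Cg'inv y) : ℂ))
    (hζmm : ∀ x y : V, ζZ (m (ι x) * m (ι y)) = (inner ℂ (Zg y) x : ℂ))
    (E : AC →ₗ⋆[ℂ] ℂ) (hE : IsGaussianOf gen mulC εC ζZ E) :
    ∀ x y : V,
      -- ⟨(x₊+y₋)|Z(x₊+y₋)⟩ = 2⟨C_g⁻¹x|y⟩ + ⟨x|Z_{g⁻¹}x⟩ + ⟨Z_g y|y⟩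
      ζZ ((p (ι x) + m (ι y)) ^ 2) =
        2 * (inner ℂ (Cginv x) y : ℂ) + (inner ℂ x (Zg' x) : ℂ) + (inner ℂ (Zg y) y : ℂ) ∧
      -- u_g((eˣ)₊(eʸ)₋) = exp(½{2⟨C_g⁻¹x|y⟩ + ⟨x|Z_{g⁻¹}x⟩ + ⟨Z_g y|y⟩})
      HasSum (fun k : ℕ => ((k.factorial : ℂ))⁻¹ * E ((p (ι x) + m (ι y)) ^ k))
        (Complex.exp ((2 : ℂ)⁻¹ *
          (2 * (inner ℂ (Cginv x) y : ℂ) + (inner ℂ x (Zg' x) : ℂ) + (inner ℂ (Zg y) y : ℂ)))) := by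
  intro x y
  have hcross : inner ℂ x (Cg'inv y) = inner ℂ (Cginv x) y := by
    have h := inner_complexLinearPart_left g hg (Cginv x) (Cg'inv y)
    rwa [← hCg, ← hCg', (hCginv x).1, (hCg'inv y).1] at h
  have hquad : ζZ ((p (ι x) + m (ι y)) ^ 2) =
      2 * inner ℂ (Cginv x) y + inner ℂ x (Zg' x) + inner ℂ (Zg y) y := by
    rw [show (p (ι x) + m (ι y)) ^ 2 = p (ι x) * p (ι x) +
        (p (ι x) * m (ι y) + p (ι x) * m (ι y)) + m (ι y) * m (ι y) by ring,
      map_add, map_add, map_add, hζpp, hζpm, hζmm, hcross]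
    ring
  have hsum_gen : p (ι x) + m (ι y) = ∑ j : Bool, gen (cond j (Sum.inl x) (Sum.inr y)) := by
    simp [hgen]
  refine ⟨hquad, ?_⟩
  rw [← hquad, hsum_gen]
  exact hE.hasSum_sum_gen_pow _ hmulC hεC hζq

/-- The metaplectic kernel formula.  With `u_g = e^Z` the metaplectic kernel of
`g ∈ Sp(V)` and `ζ_Z` the quadratic of `Z` (so `ζ_Z(w²) = ⟨w|Zw⟩`), for `x, y ∈ V`:
`⟨(x₊+y₋)|Z(x₊+y₋)⟩ = 2⟨C_g⁻¹x|y⟩ + ⟨x|Z_{g⁻¹}x⟩ + ⟨Z_g y|y⟩`, and consequently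
`u_g((eˣ)₊(eʸ)₋) = exp(½{2⟨C_g⁻¹x|y⟩ + ⟨x|Z_{g⁻¹}x⟩ + ⟨Z_g y|y⟩})`, the
left-hand side being the sum of the series `Σₖ (k!)⁻¹ e^Z((x₊+y₋)ᵏ)`. -/
theorem metaplectic_kernel_formula {V A AC : Type}
    [NormedAddCommGroup V] [InnerProductSpace ℂ V] [CompleteSpace V]
    [CommRing A] [Algebra ℂ A] [CommRing AC] [Algebra ℂ AC]
    (ι : V →ₗ[ℂ] A) (hA : IsSymmAlg ι) (hspan : SpanProdsOf fun w => ι w)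
    (p : A →ₐ[ℂ] AC) (m : A → AC) (hm : IsAntiAlgHom m)
    (gen : V ⊕ V → AC)
    (hgen : ∀ w : V ⊕ V, gen w = Sum.elim (fun v => p (ι v)) (fun v => m (ι v)) w)
    (hspanC : SpanProdsOf gen)
    (mulC : (AC →ₗ⋆[ℂ] ℂ) → (AC →ₗ⋆[ℂ] ℂ) → (AC →ₗ⋆[ℂ] ℂ))
    (hmulC : IsConvProdOf gen mulC)
    (εC : AC →ₗ⋆[ℂ] ℂ) (hεC : IsCounitOf gen εC)
    (g : V ≃L[ℝ] V)
    (hg : ∀ x y : V, (inner ℂ (g x) (g y) : ℂ).im = (inner ℂ x y : ℂ).im)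
    (Cg Ag Cg' Ag' Zg Zg' Cginv Cg'inv : V → V)
    (hCg : ∀ x : V, Cg x = (2 : ℝ)⁻¹ • (g x - Complex.I • g (Complex.I • x)))
    (hAg : ∀ x : V, Ag x = (2 : ℝ)⁻¹ • (g x + Complex.I • g (Complex.I • x)))
    (hCg' : ∀ x : V, Cg' x = (2 : ℝ)⁻¹ • (g.symm x - Complex.I • g.symm (Complex.I • x)))
    (hAg' : ∀ x : V, Ag' x = (2 : ℝ)⁻¹ • (g.symm x + Complex.I • g.symm (Complex.I • x)))
    (hZg : ∀ x : V, Cg (Zg x) = Ag x)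
    (hZg' : ∀ x : V, Cg' (Zg' x) = Ag' x)
    (hCginv : ∀ x : V, Cg (Cginv x) = x ∧ Cginv (Cg x) = x)
    (hCg'inv : ∀ x : V, Cg' (Cg'inv x) = x ∧ Cg'inv (Cg' x) = x)
    (ζZ : AC →ₗ⋆[ℂ] ℂ) (hζq : IsQuadOf gen ζZ)
    (hζpp : ∀ x y : V, ζZ (p (ι x) * p (ι y)) = (inner ℂ x (Zg' y) : ℂ))
    (hζpm : ∀ x y : V, ζZ (p (ι x) * m (ι y)) = (inner ℂ x (Cg'inv y) : ℂ))
    (hζmm : ∀ x y : V, ζZ (m (ι x) * m (ι y)) = (inner ℂ (Zg y) x : ℂ))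
    (E : AC →ₗ⋆[ℂ] ℂ) (hE : IsGaussianOf gen mulC εC ζZ E) :
    ∀ x y : V,
      -- ⟨(x₊+y₋)|Z(x₊+y₋)⟩ = 2⟨C_g⁻¹x|y⟩ + ⟨x|Z_{g⁻¹}x⟩ + ⟨Z_g y|y⟩
      ζZ ((p (ι x) + m (ι y)) ^ 2) =
        2 * (inner ℂ (Cginv x) y : ℂ) + (inner ℂ x (Zg' x) : ℂ) + (inner ℂ (Zg y) y : ℂ) ∧
      -- u_g((eˣ)₊(eʸ)₋) = exp(½{2⟨C_g⁻¹x|y⟩ + ⟨x|Z_{g⁻¹}x⟩ + ⟨Z_g y|y⟩})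
      HasSum (fun k : ℕ => ((k.factorial : ℂ))⁻¹ * E ((p (ι x) + m (ι y)) ^ k))
        (Complex.exp ((2 : ℂ)⁻¹ *
          (2 * (inner ℂ (Cginv x) y : ℂ) + (inner ℂ x (Zg' x) : ℂ) + (inner ℂ (Zg y) y : ℂ)))) :=
  metaplectic_kernel_formula_general ι p m gen hgen mulC hmulC εC hεC g hg Cg Cg' Zg Zg' Cginv
    Cg'inv hCg hCg' hCginv hCg'inv ζZ hζq hζpp hζpm hζmm E hE
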